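/- Let k be a field of characteristic 2 and B an n×n matrix over k. Then det([[0,B],[Bᵀ,0]] + I_{2n}) = Σ_{M ⊆ B} per(M), squared — equivalently det(A + I_{2n}) = (Σ_{M} per(M))² where M ranges over all square submatrices of B (with the empty submatrix contributing 1) — and this sum equals per*(B). -/

import Mathlib

/-- The partial permanent of an `n × n` matrix: the sum over all injective
partial maps `π` from `{1,…,n}` to itself of `∏_{i ∈ dom π} B i (π i)`. -/
noncomputable def partialPermanent {R : Type*} [CommRing R] {n : ℕ}
    (B : Matrix (Fin n) (Fin n) R) : R :=
  ∑ S : Finset (Fin n), ∑ π : (↥S ↪ Fin n), ∏ i : ↥S, B i.1 (π i)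

/-- The sum of the permanents of all square submatrices `B[I,J]` of `B`
(subsets `I`, `J` with `|I| = |J|`; when `|I| ≠ |J|` there is no bijection
`I ≃ J` so the inner sum is `0`; the empty submatrix contributes `1`). -/
noncomputable def subPermanentSum {R : Type*} [CommRing R] {n : ℕ}
    (B : Matrix (Fin n) (Fin n) R) : R :=
  ∑ I : Finset (Fin n), ∑ J : Finset (Fin n),
    ∑ e : (↥I ≃ ↥J), ∏ i : ↥I, B i.1 (e i).1

/-!
In characteristic 2 the determinant is the permanent. A permutation of the indices of
`[[1, B], [Bᵀ, 1]]` contributes only if it fixes or moves across each index; such a permutation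
is a pair of bijections `I ≃ J` and `J ≃ I` between subsets of the two halves, and contributes
the product of a term of `per B[I, J]` and one of `per Bᵀ[J, I] = per B[I, J]`. Hence the
determinant is `∑ per B[I, J] ^ 2`, which in characteristic 2 is `(∑ per B[I, J]) ^ 2`.
-/

open Matrix Equiv Finset

theorem CharTwo.det_eq_permanent {n R : Type*} [DecidableEq n] [Fintype n] [CommRing R]
    [CharP R 2] (M : Matrix n n R) : M.det = M.permanent := by
  rw [det_apply', permanent]
  refine sum_congr rfl fun σ _ => ?_
  rcases Int.units_eq_one_or (Perm.sign σ) with h | h <;> simp [h, CharTwo.neg_eq]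

section CrossPerm

variable {α β : Type*} [DecidableEq α] [DecidableEq β] {I : Finset α} {J : Finset β}

def crossFun (e : I ≃ J) (f : J ≃ I) : α ⊕ β → α ⊕ β
  | .inl i => if h : i ∈ I then .inr (e ⟨i, h⟩) else .inl i
  | .inr j => if h : j ∈ J then .inl (f ⟨j, h⟩) else .inr j

theorem crossFun_symm_crossFun (e : I ≃ J) (f : J ≃ I) (x : α ⊕ β) :
    crossFun f.symm e.symm (crossFun e f x) = x := by
  rcases x with i | j
  · by_cases h : i ∈ I <;> simp [crossFun, h]
  · by_cases h : j ∈ J <;> simp [crossFun, h]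

def crossPerm (e : I ≃ J) (f : J ≃ I) : Perm (α ⊕ β) where
  toFun := crossFun e f
  invFun := crossFun f.symm e.symm
  left_inv := crossFun_symm_crossFun e f
  right_inv := crossFun_symm_crossFun f.symm e.symm

@[simp] theorem crossPerm_inl_of_mem (e : I ≃ J) (f : J ≃ I) {i : α} (h : i ∈ I) :
    crossPerm e f (.inl i) = .inr (e ⟨i, h⟩) := dif_pos h

@[simp] theorem crossPerm_inl_of_notMem (e : I ≃ J) (f : J ≃ I) {i : α} (h : i ∉ I) :
    crossPerm e f (.inl i) = .inl i := dif_neg h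

@[simp] theorem crossPerm_inr_of_mem (e : I ≃ J) (f : J ≃ I) {j : β} (h : j ∈ J) :
    crossPerm e f (.inr j) = .inl (f ⟨j, h⟩) := dif_pos h

@[simp] theorem crossPerm_inr_of_notMem (e : I ≃ J) (f : J ≃ I) {j : β} (h : j ∉ J) :
    crossPerm e f (.inr j) = .inr j := dif_neg h

theorem crossPerm_injective :
    Function.Injective fun p : (I ≃ J) × (J ≃ I) => crossPerm p.1 p.2 := by
  rintro ⟨e, f⟩ ⟨e', f'⟩ h
  have hx := DFunLike.congr_fun h
  ext i
  · simpa using hx (.inl i)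
  · simpa using hx (.inr i)

variable [Fintype α] [Fintype β]

def crossing (σ : Perm (α ⊕ β)) : Finset α × Finset β :=
  (({i | (σ (.inl i)).isRight} : Finset α), ({j | (σ (.inr j)).isLeft} : Finset β))

theorem crossing_crossPerm (e : I ≃ J) (f : J ≃ I) : crossing (crossPerm e f) = (I, J) := by
  ext i
  · by_cases h : i ∈ I <;> simp [crossing, h]
  · by_cases h : i ∈ J <;> simp [crossing, h]

/- The two crossing maps induced by `σ` are injective, hence bijective by counting. -/
theorem exists_crossPerm_eq {σ : Perm (α ⊕ β)}
    (fix_inl : ∀ i i', σ (.inl i) = .inl i' → i' = i)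
    (fix_inr : ∀ j j', σ (.inr j) = .inr j' → j' = j) (hc : crossing σ = (I, J)) :
    ∃ (e : I ≃ J) (f : J ≃ I), crossPerm e f = σ := by
  obtain ⟨rfl, rfl⟩ := Prod.ext_iff.mp hc
  have hI (i : α) : i ∈ (crossing σ).1 ↔ (σ (.inl i)).isRight := by simp [crossing]
  have hJ (j : β) : j ∈ (crossing σ).2 ↔ (σ (.inr j)).isLeft := by simp [crossing]
  have cross_inl (i : (crossing σ).1) : ∃ j : (crossing σ).2, σ (.inl i) = .inr j := by
    obtain ⟨j, hj⟩ := Sum.isRight_iff.mp ((hI i).mp i.2)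
    refine ⟨⟨j, (hJ j).mpr ?_⟩, hj⟩
    rcases hσj : σ (.inr j) with i' | j'
    · rfl
    · have := σ.injective (by rw [hσj, fix_inr j j' hσj, hj] : σ (.inr j) = σ (.inl i))
      simp at this
  have cross_inr (j : (crossing σ).2) : ∃ i : (crossing σ).1, σ (.inr j) = .inl i := by
    obtain ⟨i, hi⟩ := Sum.isLeft_iff.mp ((hJ j).mp j.2)
    refine ⟨⟨i, (hI i).mpr ?_⟩, hi⟩
    rcases hσi : σ (.inl i) with i' | j'
    · have := σ.injective (by rw [hσi, fix_inl i i' hσi, hi] : σ (.inl i) = σ (.inr j))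
      simp at this
    · rfl
  choose e he using cross_inl
  choose f hf using cross_inr
  have e_inj : Function.Injective e := fun a b h =>
    Subtype.ext (Sum.inl_injective (σ.injective (by rw [he, he, h])))
  have f_inj : Function.Injective f := fun a b h =>
    Subtype.ext (Sum.inr_injective (σ.injective (by rw [hf, hf, h])))
  have hcard := le_antisymm (Fintype.card_le_of_injective e e_inj)
    (Fintype.card_le_of_injective f f_inj)
  refine ⟨.ofBijective e ((Fintype.bijective_iff_injective_and_card e).mpr ⟨e_inj, hcard⟩),
    .ofBijective f ((Fintype.bijective_iff_injective_and_card f).mpr ⟨f_inj, hcard.symm⟩), ?_⟩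
  ext (i | j) : 1
  · by_cases h : i ∈ (crossing σ).1
    · simpa [h] using (he ⟨i, h⟩).symm
    · obtain ⟨i', hi'⟩ := Sum.isLeft_iff.mp (by simpa [hI] using h)
      simp [h, hi', fix_inl i i' hi']
  · by_cases h : j ∈ (crossing σ).2
    · simpa [h] using (hf ⟨j, h⟩).symm
    · obtain ⟨j', hj'⟩ := Sum.isRight_iff.mp (by simpa [hJ] using h)
      simp [h, hj', fix_inr j j' hj']

end CrossPerm

namespace Matrix

variable {α β R : Type*} [DecidableEq α] [DecidableEq β] [CommSemiring R]

/-- The permanent of `B[I, J]`, which is `0` unless `#I = #J`. -/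
def subPermanent (B : Matrix α β R) (I : Finset α) (J : Finset β) : R :=
  ∑ e : I ≃ J, ∏ i : I, B i (e i)

theorem subPermanent_transpose (B : Matrix α β R) (I : Finset α) (J : Finset β) :
    subPermanent Bᵀ J I = subPermanent B I J :=
  Fintype.sum_bijective Equiv.symm Equiv.symm_bijective _ _ fun e => by
    simpa using (Equiv.prod_comp e.symm fun j => B (e j) j).symm

theorem sum_subPermanent_eq_sum_embedding [Fintype β] (B : Matrix α β R) (I : Finset α) :
    ∑ J, subPermanent B I J = ∑ π : I ↪ β, ∏ i : I, B i (π i) := by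
  rw [← sum_fiberwise univ fun π : I ↪ β => univ.map π]
  refine sum_congr rfl fun J _ => ?_
  refine sum_bij (fun e _ => e.toEmbedding.trans (Function.Embedding.subtype (· ∈ J)))
    (fun e _ => ?_) (fun e _ e' _ h => ?_) (fun π hπ => ?_) (fun _ _ => rfl)
  · simp only [mem_filter, mem_univ, true_and]
    ext j
    simp only [mem_map, mem_univ, true_and, Function.Embedding.trans_apply, coe_toEmbedding,
      Function.Embedding.coe_subtype, Subtype.exists]
    exact ⟨fun ⟨_, _, h⟩ => h ▸ Subtype.prop _,
      fun hj => ⟨_, _, congrArg Subtype.val (e.apply_symm_apply ⟨j, hj⟩)⟩⟩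
  · exact Equiv.ext fun i => Subtype.ext (DFunLike.congr_fun h i)
  · obtain rfl := (mem_filter.mp hπ).2
    exact ⟨(Equiv.subtypeUnivEquiv mem_univ).symm.trans (univ.equivMap π), mem_univ _, rfl⟩

variable [Fintype α] [Fintype β] {I : Finset α} {J : Finset β}

theorem prod_fromBlocks_one_one_crossPerm (B : Matrix α β R) (C : Matrix β α R) (e : I ≃ J)
    (f : J ≃ I) :
    ∏ x, fromBlocks 1 B C 1 (crossPerm e f x) x = (∏ i : I, C (e i) i) * ∏ j : J, B (f j) j := by
  rw [Fintype.prod_sum_type]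
  congr 1
  · rw [← prod_subset (subset_univ I) fun i _ hi => by simp [hi], ← prod_coe_sort I]
    simp
  · rw [← prod_subset (subset_univ J) fun j _ hj => by simp [hj], ← prod_coe_sort J]
    simp

theorem sum_crossing_eq_sum_crossPerm (B : Matrix α β R) (C : Matrix β α R) :
    ∑ σ with crossing σ = (I, J), ∏ x, fromBlocks 1 B C 1 (σ x) x =
      ∑ p : (I ≃ J) × (J ≃ I), ∏ x, fromBlocks 1 B C 1 (crossPerm p.1 p.2 x) x := by
  refine (sum_bij_ne_zero (fun p _ _ => crossPerm p.1 p.2)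
    (fun p _ _ => mem_filter.mpr ⟨mem_univ _, crossing_crossPerm p.1 p.2⟩)
    (fun _ _ _ _ _ _ h => crossPerm_injective h) (fun σ hσ hne => ?_) (fun _ _ _ => rfl)).symm
  have fix_inl (i i' : α) (h : σ (.inl i) = .inl i') : i' = i := by
    by_contra hne'
    exact hne (prod_eq_zero (mem_univ (.inl i)) (by simp [h, hne']))
  have fix_inr (j j' : β) (h : σ (.inr j) = .inr j') : j' = j := by
    by_contra hne'
    exact hne (prod_eq_zero (mem_univ (.inr j)) (by simp [h, hne']))
  obtain ⟨e, f, rfl⟩ := exists_crossPerm_eq fix_inl fix_inr (mem_filter.mp hσ).2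
  exact ⟨(e, f), mem_univ _, hne, rfl⟩

theorem permanent_fromBlocks_one_one (B : Matrix α β R) (C : Matrix β α R) :
    (fromBlocks 1 B C 1).permanent = ∑ I, ∑ J, subPermanent Cᵀ I J * subPermanent Bᵀ J I := by
  rw [permanent, ← sum_fiberwise univ crossing, Fintype.sum_prod_type]
  simp_rw [sum_crossing_eq_sum_crossPerm, prod_fromBlocks_one_one_crossPerm,
    Fintype.sum_prod_type, ← sum_mul_sum]
  rfl

end Matrix

/-- Over a field of characteristic 2, `det([[0,B],[Bᵀ,0]] + I)` equals the
square of the sum of the permanents of all square submatrices of `B`, and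
this sum equals the partial permanent `per*(B)`. -/
theorem det_add_one_eq_subPermanentSum_sq {k : Type*} [Field k] [CharP k 2]
    {n : ℕ} (B : Matrix (Fin n) (Fin n) k) :
    (Matrix.fromBlocks 0 B B.transpose 0 + 1).det = subPermanentSum B ^ 2 ∧
    subPermanentSum B = partialPermanent B := by
  have hsum : subPermanentSum B = ∑ I, ∑ J, subPermanent B I J := rfl
  have hblocks : fromBlocks 0 B Bᵀ 0 + 1 = fromBlocks 1 B Bᵀ 1 := by
    rw [← fromBlocks_one, fromBlocks_add]
    simp
  refine ⟨?_, ?_⟩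
  · rw [hblocks, CharTwo.det_eq_permanent, permanent_fromBlocks_one_one, hsum, CharTwo.sum_sq]
    simp_rw [CharTwo.sum_sq, transpose_transpose, subPermanent_transpose, sq]
  · rw [hsum, partialPermanent]
    simp_rw [sum_subPermanent_eq_sum_embedding]
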